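/- Let S be a decision rule system with n(S) > 0 and d(S) > 0, let B be a node cover of the hypergraph G(S^max), and let α be a consistent equation system that contains, for each attribute a ∈ B, exactly one equation a = δ with δ ∈ EV_S(a), and no other equations. Then either S_α is empty or d(S_α) < d(S). -/
import Mathlib


/-! Formalization of decision rule systems and decision trees
(Durdymyradov & Moshkov, "Greedy Algorithm for Inference of Decision Trees
from Decision Rule Systems"). -/

/-- Values of attributes: `some δ` is a natural number value, `none` is the
special symbol `*` (interpreted as a value not occurring in the system). -/
abbrev Val := Option ℕ

/-- A decision rule `(a_{i₁}=δ₁) ∧ ⋯ ∧ (a_{iₘ}=δₘ) → σ`: the left-hand side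
is a finite set of equations (attribute, value), the right-hand side a decision. -/
structure Rule where
  lhs : Finset (ℕ × ℕ)
  rhs : ℕ
deriving DecidableEq

namespace Rule

/-- `A(r)`: the set of attributes of a rule. -/
def attrs (r : Rule) : Finset ℕ := r.lhs.image Prod.fst

/-- `K(r)`: the equation system of the left-hand side of a rule. -/
def K (r : Rule) : Finset (ℕ × Val) := r.lhs.image (fun p => (p.1, some p.2))

/-- the length of a rule -/
def len (r : Rule) : ℕ := r.lhs.card

/-- A rule is wellformed if the attributes in its left-hand side are pairwise
different, i.e. each attribute carries at most one equation. -/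
def WF (r : Rule) : Prop := ∀ p ∈ r.lhs, ∀ q ∈ r.lhs, p.1 = q.1 → p = q

end Rule

/-- `A(S)`: the set of attributes of a system of decision rules. -/
def attrsS (S : Finset Rule) : Finset ℕ := S.biUnion Rule.attrs

/-- `n(S) = |A(S)|`. -/
def nS (S : Finset Rule) : ℕ := (attrsS S).card

/-- `d(S)`: maximum length of a rule of `S`. -/
def dS (S : Finset Rule) : ℕ := S.sup Rule.len

/-- `V_S(a)`: the set of values δ such that the equation `a = δ` occurs in `S`. -/
def VS (S : Finset Rule) (a : ℕ) : Finset ℕ :=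
  S.biUnion (fun r => (r.lhs.filter (fun p => p.1 = a)).image Prod.snd)

/-- `EV_S(a) = V_S(a) ∪ {*}`. -/
def EVS (S : Finset Rule) (a : ℕ) : Finset Val := insert none ((VS S a).image some)

/-- `k(S) = max{|V_S(a)| : a ∈ A(S)}`. -/
def kS (S : Finset Rule) : ℕ := (attrsS S).sup (fun a => (VS S a).card)

/-- A (wellformed) decision rule system: a finite nonempty set of wellformed rules. -/
def SysWF (S : Finset Rule) : Prop := S.Nonempty ∧ ∀ r ∈ S, r.WF

/-- An equation system is consistent if it does not assign two different values
to the same attribute. -/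
def Consistent (E : Finset (ℕ × Val)) : Prop :=
  ∀ p ∈ E, ∀ q ∈ E, p.1 = q.1 → p.2 = q.2

instance : DecidablePred Consistent := fun E => by unfold Consistent; infer_instance

/-- `r_α`: the rule obtained from `r` by deleting from its left-hand side all
equations belonging to `α`. -/
def Rule.restrict (r : Rule) (α : Finset (ℕ × Val)) : Rule :=
  ⟨r.lhs.filter (fun p => ((p.1, (some p.2 : Val)) ∉ α)), r.rhs⟩

/-- `S_α`: the set of rules `r_α` for `r ∈ S` with `K(r) ∪ α` consistent. -/
def sysRestrict (S : Finset Rule) (α : Finset (ℕ × Val)) : Finset Rule :=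
  (S.filter (fun r => Consistent (r.K ∪ α))).image (fun r => r.restrict α)

/-- Extended decision trees: terminal nodes are labeled with sets of rules, and a
working node is labeled with an attribute and has one child for each value
(only the children corresponding to values in `EV_S(a)` are relevant). -/
inductive DT where
  | leaf (τ : Finset Rule) : DT
  | node (a : ℕ) (c : Val → DT) : DT

/-- `Γ` is an extended decision tree over `S`: working nodes are labeled with
attributes of `A(S)` (with edges labeled by the elements of `EV_S(a)`),
terminal nodes with subsets of `S`. -/
def DT.Over (S : Finset Rule) : DT → Prop
  | .leaf τ => τ ⊆ S
  | .node a c => a ∈ attrsS S ∧ ∀ v ∈ EVS S a, DT.Over S (c v)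

/-- `h(Γ)`: the maximum number of working nodes in a complete path of `Γ`. -/
def DT.depth (S : Finset Rule) : DT → ℕ
  | .leaf _ => 0
  | .node a c => 1 + (EVS S a).sup (fun v => DT.depth S (c v))

/-- The number of terminal nodes of `Γ`. -/
def DT.numLeaves (S : Finset Rule) : DT → ℕ
  | .leaf _ => 1
  | .node a c => ∑ v ∈ EVS S a, DT.numLeaves S (c v)

/-- `Γ` solves `EAR(S)` starting from the already accumulated equation system `E`:
for every complete path `ξ` with consistent `K(ξ)`, every rule of the terminal
label `τ(ξ)` satisfies `K(r) ⊆ K(ξ)`, and every other rule of `S` has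
`K(r) ∪ K(ξ)` inconsistent. -/
def DT.SolvesFrom (S : Finset Rule) : DT → Finset (ℕ × Val) → Prop
  | .leaf τ, E => Consistent E →
      (∀ r ∈ τ, r.K ⊆ E) ∧ ∀ r ∈ S, r ∉ τ → ¬ Consistent (r.K ∪ E)
  | .node a c, E => ∀ v ∈ EVS S a, DT.SolvesFrom S (c v) (insert (a, v) E)

/-- `Γ` is a decision tree over `S` solving the problem `EAR(S)`. -/
def DT.SolvesEAR (S : Finset Rule) (Γ : DT) : Prop := Γ.Over S ∧ Γ.SolvesFrom S ∅

/-- `h_EAR(S)`: the minimum depth of a decision tree over `S` solving `EAR(S)`. -/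
noncomputable def hEAR (S : Finset Rule) : ℕ :=
  sInf {n | ∃ Γ : DT, DT.SolvesEAR S Γ ∧ DT.depth S Γ = n}

/-- A node cover of the hypergraph `G(S)`. -/
def IsNodeCover (S : Finset Rule) (B : Finset ℕ) : Prop :=
  B ⊆ attrsS S ∧ ∀ r ∈ S, r.attrs.Nonempty → (r.attrs ∩ B).Nonempty

/-- `β(S)`: the minimum cardinality of a node cover of `G(S)`. -/
noncomputable def betaS (S : Finset Rule) : ℕ :=
  sInf {k | ∃ B : Finset ℕ, IsNodeCover S B ∧ B.card = k}

/-- `M` is a possible choice of `S^max`: a set of rules of `S` of length `d(S)`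
containing exactly one representative from each equivalence class
(`r₁ ∼ r₂ iff K(r₁) = K(r₂)`) of the set of rules of length `d(S)`, and
no other rules. -/
def IsMaxSet (S M : Finset Rule) : Prop :=
  (∀ r ∈ M, r ∈ S ∧ r.len = dS S) ∧
  (∀ r ∈ S, r.len = dS S → ∃ r' ∈ M, r'.K = r.K) ∧
  (∀ r₁ ∈ M, ∀ r₂ ∈ M, r₁.K = r₂.K → r₁ = r₂)

/-- `δ̄ ∈ EV(S)`, a tuple represented as a function on attributes. -/
def InEV (S : Finset Rule) (f : ℕ → Val) : Prop := ∀ a ∈ attrsS S, f a ∈ EVS S a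

/-- `K(S, δ̄)`. -/
def KofTuple (S : Finset Rule) (f : ℕ → Val) : Finset (ℕ × Val) :=
  (attrsS S).image (fun a => (a, f a))

/-- The rule `r` is realizable for the tuple `δ̄`, i.e. `K(r) ⊆ K(S, δ̄)`. -/
def Realizable (S : Finset Rule) (f : ℕ → Val) (r : Rule) : Prop :=
  r.K ⊆ KofTuple S f

instance (S : Finset Rule) (f : ℕ → Val) : DecidablePred (Realizable S f) :=
  fun r => by unfold Realizable; infer_instance

/-- Let `S` be a decision rule system with `n(S) > 0` and `d(S) > 0`, let `B`
be a node cover of the hypergraph `G(S^max)`, and let `α` be a consistent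
equation system containing, for each attribute `a ∈ B`, exactly one equation
`a = δ` with `δ ∈ EV_S(a)`, and no other equations. Then either `S_α` is
empty or `d(S_α) < d(S)`. -/
theorem dS_restrict_lt (S : Finset Rule) (hS : SysWF S) (hn : 0 < nS S)
    (hd : 0 < dS S) (M : Finset Rule) (hM : IsMaxSet S M)
    (B : Finset ℕ) (hB : IsNodeCover M B)
    (α : Finset (ℕ × Val)) (hcons : Consistent α)
    (hα₁ : ∀ p ∈ α, p.1 ∈ B ∧ p.2 ∈ EVS S p.1)
    (hα₂ : ∀ a ∈ B, ∃ v, (a, v) ∈ α) :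
    sysRestrict S α = ∅ ∨ dS (sysRestrict S α) < dS S := by
  rcases eq_or_ne (sysRestrict S α) ∅ with h | h
  · exact Or.inl h
  right
  rw [dS, Finset.sup_lt_iff hd]
  intro r' hr'
  simp only [sysRestrict, Finset.mem_image, Finset.mem_filter] at hr'
  obtain ⟨r, ⟨hrS, hrc⟩, rfl⟩ := hr'
  have hle : (r.restrict α).len ≤ r.len := Finset.card_filter_le _ _
  have hrd : r.len ≤ dS S := Finset.le_sup hrS
  rcases lt_or_eq_of_le hrd with hlt | heq
  · exact lt_of_le_of_lt hle hlt
  -- r has maximal length; find an attribute of r in B, removed by restrict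
  obtain ⟨r'', hr''M, hK⟩ := hM.2.1 r hrS heq
  have hlen'' : r''.len = dS S := (hM.1 r'' hr''M).2
  have hne : r''.attrs.Nonempty := by
    have : r''.lhs.Nonempty := Finset.card_pos.mp (by rw [← Rule.len, hlen'']; exact hd)
    exact this.image _
  obtain ⟨a, ha⟩ := hB.2 r'' hr''M hne
  have haB : a ∈ B := (Finset.mem_inter.mp ha).2
  have haA : a ∈ r''.attrs := (Finset.mem_inter.mp ha).1
  obtain ⟨p, hp, hpa⟩ := Finset.mem_image.mp haA
  have hKr : (a, (some p.2 : Val)) ∈ r.K := by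
    rw [← hK]
    exact Finset.mem_image.mpr ⟨p, hp, by rw [hpa]⟩
  obtain ⟨q, hq, hqe⟩ := Finset.mem_image.mp hKr
  obtain ⟨v, hv⟩ := hα₂ a haB
  have hfst : q.1 = a := congrArg Prod.fst hqe
  have hveq : (some q.2 : Val) = v := by
    have h1 : (q.1, (some q.2 : Val)) ∈ r.K ∪ α :=
      Finset.mem_union_left _ (Finset.mem_image.mpr ⟨q, hq, rfl⟩)
    have h2 : (a, v) ∈ r.K ∪ α := Finset.mem_union_right _ hv
    exact hrc _ h1 _ h2 hfst
  have hqα : (q.1, (some q.2 : Val)) ∈ α := by rw [hveq, hfst]; exact hv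
  have hss : (r.restrict α).lhs ⊂ r.lhs := by
    refine Finset.ssubset_iff_of_subset (Finset.filter_subset _ _) |>.mpr ⟨q, hq, ?_⟩
    simp only [Rule.restrict, Finset.mem_filter, not_and, not_not]
    exact fun _ => hqα
  calc (r.restrict α).len < r.len := Finset.card_lt_card hss
    _ = dS S := heq
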